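/- arXiv:2409.11255 — 2 statements merged into one kernel-verified Lean document; each statement's English description precedes it below -/
import Mathlib

section
/- The 3-stage SDIRK method with Butcher tableau c = (γ, 1/2, 1-γ), A = [[γ,0,0],[1/2-γ,γ,0],[2γ,1-4γ,γ]], b = (μ, 1-2μ, μ), where γ = (1/√3)cos(π/18) + 1/2 and μ = 1/(6(2γ-1)²), has nonnegative weights: μ ≥ 0 and 1 - 2μ ≥ 0. -/
open Real

/-- The SDIRK method (6.1) of Du, Ju & Lu, with
`γ = (1/√3)·cos(π/18) + 1/2` and `μ = 1/(6(2γ-1)²)`, Butcher tableau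
`c = (γ, 1/2, 1-γ)`, `A = [[γ,0,0],[1/2-γ,γ,0],[2γ,1-4γ,γ]]`,
`b = (μ, 1-2μ, μ)`, has nonnegative weights. -/
theorem sdirk_weights_nonneg :
    let γ : ℝ := (1 / Real.sqrt 3) * Real.cos (π / 18) + 1 / 2
    let μ : ℝ := 1 / (6 * (2 * γ - 1)^2)
    let c : Fin 3 → ℝ := ![γ, 1/2, 1 - γ]
    let A : Matrix (Fin 3) (Fin 3) ℝ := !![γ, 0, 0; 1/2 - γ, γ, 0; 2*γ, 1 - 4*γ, γ]
    let b : Fin 3 → ℝ := ![μ, 1 - 2*μ, μ]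
    (0 ≤ μ ∧ 0 ≤ 1 - 2*μ) ∧ ∀ i : Fin 3, 0 ≤ b i := by
  intro γ μ c A b
  have hπ := Real.pi_pos
  have hc2 : (1:ℝ)/2 ≤ Real.cos (π / 18) := by
    rw [show (1:ℝ)/2 = Real.cos (π/3) by rw [Real.cos_pi_div_three]]
    apply Real.cos_le_cos_of_nonneg_of_le_pi <;> nlinarith
  have hc1 : Real.cos (π / 18) ≤ 1 := Real.cos_le_one _
  have hs : Real.sqrt 3 ^ 2 = 3 := Real.sq_sqrt (by norm_num)
  have hs0 : (0:ℝ) < Real.sqrt 3 := Real.sqrt_pos.mpr (by norm_num)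
  have hkey : 6 * (2 * γ - 1)^2 = 8 * Real.cos (π/18)^2 := by
    show 6 * (2 * ((1 / Real.sqrt 3) * Real.cos (π / 18) + 1 / 2) - 1)^2 = _
    field_simp
    nlinarith [hs]
  have hpos : (0:ℝ) < 6 * (2 * γ - 1)^2 := by
    rw [hkey]; nlinarith
  have hμ0 : 0 ≤ μ := le_of_lt (by exact div_pos one_pos hpos)
  have hμhalf : μ ≤ 1/2 := by
    rw [show μ = 1 / (6 * (2 * γ - 1)^2) from rfl, hkey]
    rw [div_le_div_iff₀ (by nlinarith) (by norm_num)]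
    nlinarith
  refine ⟨⟨hμ0, by linarith⟩, ?_⟩
  intro i
  fin_cases i <;> simp [b] <;> linarith
end

section
/- For the 3-stage SDIRK method with A = [[γ,0,0],[1/2-γ,γ,0],[2γ,1-4γ,γ]], b = (μ, 1-2μ, μ), γ = (1/√3)cos(π/18) + 1/2, μ = 1/(6(2γ-1)²), the symmetric matrix M with entries m_{ij} = b_i a_{ij} + b_j a_{ji} - b_i b_j is positive semidefinite. -/
open Real

/-- Algebraic stability (ABS-2) of the SDIRK method (6.1) of Du, Ju & Lu:
with `γ = (1/√3)·cos(π/18) + 1/2`, `μ = 1/(6(2γ-1)²)`,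
`A = [[γ,0,0],[1/2-γ,γ,0],[2γ,1-4γ,γ]]`, `b = (μ, 1-2μ, μ)`, the matrix
`M` with `m_{ij} = bᵢ a_{ij} + bⱼ a_{ji} - bᵢ bⱼ` is positive semidefinite. -/
theorem sdirk_algebraic_stability_matrix_psd :
    let γ : ℝ := (1 / Real.sqrt 3) * Real.cos (π / 18) + 1 / 2
    let μ : ℝ := 1 / (6 * (2 * γ - 1)^2)
    let A : Matrix (Fin 3) (Fin 3) ℝ := !![γ, 0, 0; 1/2 - γ, γ, 0; 2*γ, 1 - 4*γ, γ]
    let b : Fin 3 → ℝ := ![μ, 1 - 2*μ, μ]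
    Matrix.PosSemidef (Matrix.of fun i j => b i * A i j + b j * A j i - b i * b j) := by
  intro γ μ A b
  have hs3 : Real.sqrt 3 ^ 2 = 3 := Real.sq_sqrt (by norm_num)
  have hs3pos : (0:ℝ) < Real.sqrt 3 := Real.sqrt_pos.mpr (by norm_num)
  have hcpos : (0:ℝ) < Real.cos (π / 18) := by
    apply Real.cos_pos_of_mem_Ioo
    constructor
    · have := Real.pi_pos; linarith [this]
    · have := Real.pi_pos; nlinarith [this]
  -- The cubic identity for t = 2γ - 1
  have h3c : Real.cos (3 * (π / 18)) = 4 * Real.cos (π / 18) ^ 3 - 3 * Real.cos (π / 18) :=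
    Real.cos_three_mul _
  have h18 : (3 : ℝ) * (π / 18) = π / 6 := by ring
  have hc3 : 4 * Real.cos (π / 18) ^ 3 - 3 * Real.cos (π / 18) = Real.sqrt 3 / 2 := by
    rw [h18] at h3c
    rw [← h3c, Real.cos_pi_div_six]
  have hne : Real.sqrt 3 ≠ 0 := ne_of_gt hs3pos
  have ht : Real.sqrt 3 * (2 * γ - 1) = 2 * Real.cos (π / 18) := by
    show Real.sqrt 3 * (2 * ((1 / Real.sqrt 3) * Real.cos (π / 18) + 1 / 2) - 1)
        = 2 * Real.cos (π / 18)
    field_simp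
    ring
  have h2 : 3 * Real.sqrt 3 * (2 * γ - 1) ^ 3
      = 3 * Real.sqrt 3 * (2 * γ - 1) + Real.sqrt 3 := by
    linear_combination ((Real.sqrt 3 * (2 * γ - 1)) ^ 2
        + 2 * Real.cos (π / 18) * (Real.sqrt 3 * (2 * γ - 1))
        + 4 * Real.cos (π / 18) ^ 2 - 3) * ht + 2 * hc3
      - (Real.sqrt 3 * (2 * γ - 1) ^ 3) * hs3
  have h3ne : (3 * Real.sqrt 3 : ℝ) ≠ 0 := by positivity
  have hcube : (2 * γ - 1) ^ 3 = (2 * γ - 1) + 1 / 3 :=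
    mul_left_cancel₀ h3ne (by linear_combination h2)
  have htpos : (0:ℝ) < 2 * γ - 1 := by
    show (0:ℝ) < 2 * ((1 / Real.sqrt 3) * Real.cos (π / 18) + 1 / 2) - 1
    have : (0:ℝ) < (1 / Real.sqrt 3) * Real.cos (π / 18) := by positivity
    linarith
  have ht1 : (1:ℝ) < 2 * γ - 1 := by
    by_contra h
    push_neg at h
    have hprod : (0:ℝ) ≤ (1 - (2 * γ - 1)) * (2 * γ - 1) * ((2 * γ - 1) + 1) :=
      mul_nonneg (mul_nonneg (by linarith) htpos.le) (by linarith)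
    have hexp : (1 - (2*γ-1)) * (2*γ-1) * ((2*γ-1)+1) = (2*γ-1) - (2*γ-1)^3 := by ring
    rw [hexp] at hprod
    have hval : 2 * γ - 1 - (2 * γ - 1) ^ 3 = -(1/3) := by linear_combination -hcube
    rw [hval] at hprod
    norm_num at hprod
  have htne : (6 * (2 * γ - 1) ^ 2 : ℝ) ≠ 0 := by positivity
  have hμ' : μ * (6 * (2 * γ - 1) ^ 2) = 1 := by
    show (1 / (6 * (2 * γ - 1)^2)) * (6 * (2 * γ - 1)^2) = 1
    field_simp
  have hμpos : (0:ℝ) < μ := by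
    have h0 : (0:ℝ) < 6 * (2 * γ - 1)^2 := by positivity
    exact div_pos one_pos h0
  have hkey : 6 * μ * γ - 2 * μ = γ - 1 / 2 := by
    linear_combination (-3 * μ) * hcube + ((2 * γ - 1) / 2) * hμ'
  have hμsmall : μ < 2 * γ := by
    have h6 : (6:ℝ) < 6 * (2 * γ - 1)^2 := by nlinarith [ht1]
    have hlt : μ < 1 / 6 := by
      show 1 / (6 * (2 * γ - 1)^2) < 1 / 6
      apply (div_lt_div_iff₀ (by positivity) (by norm_num)).mpr
      linarith
    linarith [ht1]
  have hα : (0:ℝ) ≤ μ * (2 * γ - μ) := mul_nonneg hμpos.le (by linarith)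
  set s : ℝ := Real.sqrt (μ * (2 * γ - μ)) with hsdef
  have hs' : s * s = μ * (2 * γ - μ) := Real.mul_self_sqrt hα
  set N : Matrix (Fin 1) (Fin 3) ℝ := Matrix.of (fun _ j => (![s, -2 * s, s] : Fin 3 → ℝ) j)
    with hN
  have hEq : (Matrix.of fun i j => b i * A i j + b j * A j i - b i * b j)
      = N.conjTranspose * N := by
    ext i j
    fin_cases i <;> fin_cases j <;>
      simp [N, A, b, Matrix.mul_apply, Fin.sum_univ_succ, Matrix.conjTranspose_apply] <;>
      first
        | linear_combination hs'
        | linear_combination -hs'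
        | linear_combination 2 * hs' + hkey
        | linear_combination -2 * hs' - hkey
        | linear_combination 2 * hs'
        | linear_combination -2 * hs'
        | linear_combination 4 * hs' + 2 * hkey
        | linear_combination -4 * hs' - 2 * hkey
  rw [hEq]
  exact Matrix.posSemidef_conjTranspose_mul_self N
end
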